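/- For a uniformly random a ∈ {0,1}, the quantity (1/2)‖cos²(α/2)⟨0|φ_{0,1−a}⟩ + sin²(α/2)⟨a+1|φ_{a+1,1−a}⟩‖² summed over a ∈ {0,1} is at most ((1/√2)cos²(α/2) + sin²(α/2))², given ‖φ_{0,0}‖² + ‖φ_{0,1}‖² ≤ 1 and ‖φ_{i,b}‖ ≤ 1 for all i, b. -/

import Mathlib

/-- The qSlice `⟨j|φ⟩ ∈ H`: the projection of `φ ∈ ℂ³ ⊗ H` under `|j⟩⟨j| ⊗ I`,
viewed as a vector of `H`. -/
noncomputable def qSlice {m : Type*} [Fintype m] (j : Fin 3)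
    (φ : EuclideanSpace ℂ (Fin 3 × m)) : EuclideanSpace ℂ m :=
  (WithLp.equiv 2 (m → ℂ)).symm fun k => φ (j, k)

/-!
Write `c = cos²(α/2)`, `s = sin²(α/2)` and `t_a = ‖⟨0|φ_{0,a+1}⟩‖`. Projections do not increase
norms, so by the triangle inequality the `a`-th vector has norm at most `c t_a + s`. Since
`t₀² + t₁² ≤ 1`, Cauchy–Schwarz gives `t₀ + t₁ ≤ √2`, and expanding
`((c t₀ + s)² + (c t₁ + s)²) / 2` yields at most `c²/2 + √2 c s + s² = (c/√2 + s)²`.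
-/

lemma norm_qSlice_le {m : Type*} [Fintype m] (j : Fin 3) (φ : EuclideanSpace ℂ (Fin 3 × m)) :
    ‖qSlice j φ‖ ≤ ‖φ‖ := by
  refine (sq_le_sq₀ (norm_nonneg _) (norm_nonneg _)).mp ?_
  rw [EuclideanSpace.norm_sq_eq, EuclideanSpace.norm_sq_eq, Fintype.sum_prod_type]
  exact Finset.single_le_sum (f := fun i => ∑ k, ‖φ (i, k)‖ ^ 2)
    (fun _ _ => by positivity) (Finset.mem_univ j)

lemma norm_ofReal_sq_smul {E : Type*} [SeminormedAddCommGroup E] [NormedSpace ℂ E]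
    (r : ℝ) (x : E) : ‖(r : ℂ) ^ 2 • x‖ = r ^ 2 * ‖x‖ := by
  rw [norm_smul, norm_pow, Complex.norm_real, Real.norm_eq_abs, sq_abs]

lemma add_le_sqrt_two_of_sq_add_sq_le_one {x y : ℝ} (h : x ^ 2 + y ^ 2 ≤ 1) :
    x + y ≤ Real.sqrt 2 :=
  (le_abs_self _).trans <| Real.abs_le_sqrt <| by nlinarith [sq_nonneg (x - y)]

lemma half_sum_sq_mul_add_le {c s t₀ t₁ : ℝ} (hc : 0 ≤ c) (hs : 0 ≤ s)
    (ht : t₀ ^ 2 + t₁ ^ 2 ≤ 1) :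
    (1 / 2) * ((c * t₀ + s) ^ 2 + (c * t₁ + s) ^ 2) ≤ ((Real.sqrt 2)⁻¹ * c + s) ^ 2 := by
  have hsum := add_le_sqrt_two_of_sq_add_sq_le_one ht
  have hsqrt : Real.sqrt 2 ^ 2 = 2 := Real.sq_sqrt zero_le_two
  have hinv : (Real.sqrt 2)⁻¹ = Real.sqrt 2 / 2 := by
    field_simp
    exact hsqrt.symm
  rw [hinv]
  nlinarith [mul_le_mul_of_nonneg_left ht (sq_nonneg c),
    mul_le_mul_of_nonneg_left hsum (mul_nonneg hc hs)]

theorem bob_cheating_key_bound_general (α : ℝ)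
    {m : Type*} [Fintype m]
    (φ : Fin 3 → Fin 2 → EuclideanSpace ℂ (Fin 3 × m))
    (hsum : ‖φ 0 0‖ ^ 2 + ‖φ 0 1‖ ^ 2 ≤ 1)
    (hall : ∀ (i : Fin 3) (b : Fin 2), ‖φ i b‖ ≤ 1) :
    (1 / 2) * ∑ a : Fin 2,
        ‖(Real.cos (α / 2) : ℂ) ^ 2 • qSlice 0 (φ 0 (a + 1)) +
          (Real.sin (α / 2) : ℂ) ^ 2 • qSlice a.succ (φ a.succ (a + 1))‖ ^ 2 ≤
      ((Real.sqrt 2)⁻¹ * Real.cos (α / 2) ^ 2 + Real.sin (α / 2) ^ 2) ^ 2 := by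
  set c := Real.cos (α / 2)
  set s := Real.sin (α / 2)
  set t : Fin 2 → ℝ := fun a => ‖qSlice 0 (φ 0 (a + 1))‖
  have hterm : ∀ a : Fin 2, ‖(c : ℂ) ^ 2 • qSlice 0 (φ 0 (a + 1)) +
      (s : ℂ) ^ 2 • qSlice a.succ (φ a.succ (a + 1))‖ ≤ c ^ 2 * t a + s ^ 2 := fun a =>
    calc _ ≤ ‖(c : ℂ) ^ 2 • qSlice 0 (φ 0 (a + 1))‖ +
          ‖(s : ℂ) ^ 2 • qSlice a.succ (φ a.succ (a + 1))‖ := norm_add_le _ _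
      _ ≤ c ^ 2 * t a + s ^ 2 * 1 := by
          rw [norm_ofReal_sq_smul, norm_ofReal_sq_smul]
          gcongr
          exact (norm_qSlice_le _ _).trans (hall _ _)
      _ = c ^ 2 * t a + s ^ 2 := by rw [mul_one]
  have ht : t 0 ^ 2 + t 1 ^ 2 ≤ 1 := by
    have : t 0 ^ 2 + t 1 ^ 2 ≤ ‖φ 0 1‖ ^ 2 + ‖φ 0 0‖ ^ 2 := by
      gcongr <;> exact norm_qSlice_le _ _
    linarith
  calc _ ≤ (1 / 2) * ∑ a : Fin 2, (c ^ 2 * t a + s ^ 2) ^ 2 := by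
        gcongr with a
        exact hterm a
    _ = (1 / 2) * ((c ^ 2 * t 0 + s ^ 2) ^ 2 + (c ^ 2 * t 1 + s ^ 2) ^ 2) := by
        rw [Fin.sum_univ_two]
    _ ≤ _ := half_sum_sq_mul_add_le (sq_nonneg c) (sq_nonneg s) ht

/-- `(1/2) Σ_a ‖cos²(α/2)⟨0|φ_{0,1−a}⟩ + sin²(α/2)⟨a+1|φ_{a+1,1−a}⟩‖²
≤ ((1/√2)cos²(α/2) + sin²(α/2))²` given `‖φ_{0,0}‖² + ‖φ_{0,1}‖² ≤ 1` and `‖φ_{i,b}‖ ≤ 1`. -/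
theorem bob_cheating_key_bound (α : ℝ) (hα : α ∈ Set.Icc 0 Real.pi)
    {m : Type*} [Fintype m]
    (φ : Fin 3 → Fin 2 → EuclideanSpace ℂ (Fin 3 × m))
    (hsum : ‖φ 0 0‖ ^ 2 + ‖φ 0 1‖ ^ 2 ≤ 1)
    (hall : ∀ (i : Fin 3) (b : Fin 2), ‖φ i b‖ ≤ 1) :
    (1 / 2) * ∑ a : Fin 2,
        ‖(Real.cos (α / 2) : ℂ) ^ 2 • qSlice 0 (φ 0 (a + 1)) +
          (Real.sin (α / 2) : ℂ) ^ 2 • qSlice a.succ (φ a.succ (a + 1))‖ ^ 2 ≤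
      ((Real.sqrt 2)⁻¹ * Real.cos (α / 2) ^ 2 + Real.sin (α / 2) ^ 2) ^ 2 :=
  bob_cheating_key_bound_general α φ hsum hall
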